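/- With the same setup, the Littlewood–Paley identity also holds with discrete derivatives: (f, g)_{ℓ²(ℤ)} = 4 ∫₀^∞ (∂⁺_x f(y,·), ∂⁺_x g(y,·))_{ℓ²(ℤ)} · y dy, where ∂⁺_x acts in the ℤ-variable. -/

import Mathlib

open scoped Real ENNReal ComplexConjugate
open MeasureTheory AddCircle

noncomputable section

/-- Discrete Fourier transform of a sequence. -/
def dft (f : ℤ → ℂ) (ξ : ℝ) : ℂ :=
  ∑' x : ℤ, f x * Complex.exp (-(2 * (π : ℂ) * Complex.I * (x : ℂ) * (ξ : ℂ)))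

/-- The semidiscrete Poisson extension `(P_y f)(x)` of `f : ℤ → ℂ`, where
`P_y = e^{-yA}` and `A = √(-Δ)` is the Fourier multiplier `2|sin(πξ)|`. -/
def poisson (f : ℤ → ℂ) (y : ℝ) (x : ℤ) : ℂ :=
  ∫ ξ in (-(1:ℝ)/2)..(1/2),
    dft f ξ * Complex.exp (((-(2 * |Real.sin (π * ξ)| * y)) : ℝ) : ℂ) *
      Complex.exp (2 * (π : ℂ) * Complex.I * (x : ℂ) * (ξ : ℂ))

lemma norm_term (f : ℤ → ℂ) (ξ : ℝ) (a : ℤ) :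
    ‖f a * Complex.exp (-(2 * (π : ℂ) * Complex.I * (a : ℂ) * (ξ : ℂ)))‖ = ‖f a‖ := by
  rw [norm_mul, Complex.norm_exp]
  have : (-(2 * (π : ℂ) * Complex.I * (a : ℂ) * (ξ : ℂ))).re = 0 := by
    simp [Complex.mul_re, Complex.mul_im]
  rw [this, Real.exp_zero, mul_one]

lemma dft_hasSum (f : ℤ → ℂ) (hf : Summable fun x => ‖f x‖) (ξ : ℝ) :
    HasSum (fun a : ℤ => f a * Complex.exp (-(2 * (π : ℂ) * Complex.I * (a : ℂ) * (ξ : ℂ))))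
      (dft f ξ) := by
  refine (Summable.hasSum_iff ?_).2 rfl
  refine Summable.of_norm ?_
  simpa only [norm_term] using hf

lemma dft_norm_le (f : ℤ → ℂ) (hf : Summable fun x => ‖f x‖) (ξ : ℝ) :
    ‖dft f ξ‖ ≤ ∑' x, ‖f x‖ := by
  refine norm_tsum_le_tsum_norm ?_ |>.trans ?_
  · simpa only [norm_term] using hf
  · simp only [norm_term]; exact le_rfl

lemma dft_continuous (f : ℤ → ℂ) (hf : Summable fun x => ‖f x‖) : Continuous (dft f) := by
  refine continuous_tsum (fun a => ?_) hf (fun a ξ => (norm_term f ξ a).le)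
  exact Continuous.mul continuous_const (Complex.continuous_exp.comp (by continuity))

lemma dft_periodic (f : ℤ → ℂ) : Function.Periodic (dft f) 1 := by
  intro ξ
  unfold dft
  congr 1; ext a
  have h1 : Complex.exp (((-a : ℤ) : ℂ) * (2 * (π:ℂ) * Complex.I)) = 1 :=
    Complex.exp_int_mul_two_pi_mul_I (-a)
  push_cast at h1 ⊢
  rw [show -(2 * (π:ℂ) * Complex.I * a * (ξ + 1)) =
    -(2 * (π:ℂ) * Complex.I * a * ξ) + (-a) * (2 * (π:ℂ) * Complex.I) by ring,
    Complex.exp_add, h1, mul_one]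

/-- integrand of the difference of Poisson extensions -/
def phifun (f : ℤ → ℂ) (y ξ : ℝ) : ℂ :=
  dft f ξ * Complex.exp (((-(2 * |Real.sin (π * ξ)| * y)) : ℝ) : ℂ) *
    (Complex.exp (2 * (π : ℂ) * Complex.I * (ξ : ℂ)) - 1)

lemma ker_continuous (y : ℝ) :
    Continuous fun ξ : ℝ => Complex.exp (((-(2 * |Real.sin (π * ξ)| * y)) : ℝ) : ℂ) := by
  refine Complex.continuous_exp.comp (Complex.continuous_ofReal.comp ?_)
  exact ((continuous_const.mul ((Real.continuous_sin.comp
    (continuous_const.mul continuous_id)).abs)).mul continuous_const).neg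

lemma phifun_continuous (f : ℤ → ℂ) (hf : Summable fun x => ‖f x‖) (y : ℝ) :
    Continuous (phifun f y) := by
  unfold phifun
  exact ((dft_continuous f hf).mul (ker_continuous y)).mul
    ((Complex.continuous_exp.comp (continuous_const.mul Complex.continuous_ofReal)).sub
      continuous_const)

lemma phifun_periodic (f : ℤ → ℂ) (y : ℝ) : Function.Periodic (phifun f y) 1 := by
  intro ξ
  have h1 : |Real.sin (π * (ξ + 1))| = |Real.sin (π * ξ)| := by
    rw [mul_add, mul_one, Real.sin_add_pi, abs_neg]
  have h2 : Complex.exp (2 * (π:ℂ) * Complex.I * ((ξ:ℝ) + 1 : ℝ)) =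
      Complex.exp (2 * (π:ℂ) * Complex.I * (ξ:ℂ)) := by
    rw [Complex.ofReal_add, Complex.ofReal_one, show 2 * (π:ℂ) * Complex.I * ((ξ:ℂ) + 1) =
      2 * (π:ℂ) * Complex.I * ξ + (1:ℤ) * (2 * π * Complex.I) by push_cast; ring,
      Complex.exp_add, Complex.exp_int_mul_two_pi_mul_I, mul_one]
  unfold phifun
  rw [dft_periodic, h1, h2]

lemma poisson_sub (f : ℤ → ℂ) (hf : Summable fun x => ‖f x‖) (y : ℝ) (x : ℤ) :
    poisson f y (x + 1) - poisson f y x =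
      ∫ ξ in (-(1:ℝ)/2)..(1/2),
        phifun f y ξ * Complex.exp (2 * (π : ℂ) * Complex.I * (x : ℂ) * (ξ : ℂ)) := by
  unfold poisson
  rw [← intervalIntegral.integral_sub]
  · apply intervalIntegral.integral_congr
    intro ξ _
    have hx : ((x + 1 : ℤ) : ℂ) = (x : ℂ) + 1 := by push_cast; ring
    simp only [hx]
    rw [show 2 * (π:ℂ) * Complex.I * ((x:ℂ) + 1) * ξ =
      2 * (π:ℂ) * Complex.I * (x:ℂ) * ξ + 2 * (π:ℂ) * Complex.I * ξ by ring,
      Complex.exp_add]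
    unfold phifun
    ring
  · apply Continuous.intervalIntegrable
    exact ((dft_continuous f hf).mul (ker_continuous y)).mul
      (Complex.continuous_exp.comp (by continuity))
  · apply Continuous.intervalIntegrable
    exact ((dft_continuous f hf).mul (ker_continuous y)).mul
      (Complex.continuous_exp.comp (by continuity))


lemma lift_fourierCoeff (F : ℝ → ℂ) (hFp : Function.Periodic F 1) (n : ℤ) :
    haveI : Fact ((0:ℝ) < 1) := ⟨one_pos⟩
    fourierCoeff hFp.lift n =
      ∫ ξ in (-(1:ℝ)/2)..(1/2),
        F ξ * Complex.exp (2 * (π : ℂ) * Complex.I * ((-n : ℤ) : ℂ) * (ξ : ℂ)) := by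
  haveI : Fact ((0:ℝ) < 1) := ⟨one_pos⟩
  rw [fourierCoeff_eq_intervalIntegral _ n (-(1:ℝ)/2)]
  rw [show (-(1:ℝ)/2 + 1) = 1/2 by norm_num]
  rw [show ((1:ℝ)/1) = 1 by norm_num, one_smul]
  apply intervalIntegral.integral_congr
  intro ξ _
  simp only [smul_eq_mul]
  rw [fourier_coe_apply, Function.Periodic.lift_coe]
  rw [Complex.ofReal_one, div_one, mul_comm]

lemma parseval_core (Φ Γ : ℝ → ℂ) (hΦc : Continuous Φ) (hΓc : Continuous Γ)
    (hΦp : Function.Periodic Φ 1) (hΓp : Function.Periodic Γ 1) :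
    ∑' x : ℤ, ((∫ ξ in (-(1:ℝ)/2)..(1/2),
        Φ ξ * Complex.exp (2 * (π : ℂ) * Complex.I * (x : ℂ) * (ξ : ℂ))) *
      (∫ ξ in (-(1:ℝ)/2)..(1/2),
        Γ ξ * Complex.exp (2 * (π : ℂ) * Complex.I * (x : ℂ) * (ξ : ℂ)))) =
    ∫ ξ in (-(1:ℝ)/2)..(1/2), Φ ξ * Γ (-ξ) := by
  haveI : Fact ((0:ℝ) < 1) := ⟨one_pos⟩
  set H : ℝ → ℂ := fun ξ => conj (Γ (-ξ)) with hH
  have hHp : Function.Periodic H 1 := by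
    intro ξ
    have h := hΓp (-(ξ + 1))
    rw [show (-(ξ + 1) + 1) = -ξ by ring] at h
    simp only [hH]
    rw [← h]
  have hHc : Continuous H := Complex.continuous_conj.comp (hΓc.comp continuous_neg)
  set ΦA : AddCircle (1:ℝ) → ℂ := hΦp.lift with hΦA
  set ΓA : AddCircle (1:ℝ) → ℂ := hΓp.lift with hΓA
  set HA : AddCircle (1:ℝ) → ℂ := hHp.lift with hHA
  have hΦAc : Continuous ΦA := hΦc.quotient_liftOn' _
  have hΓAc : Continuous ΓA := hΓc.quotient_liftOn' _
  have hHAc : Continuous HA := hHc.quotient_liftOn' _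
  have hHAconj : ∀ t : AddCircle (1:ℝ), conj (HA t) = ΓA (-t) := by
    intro t
    induction t using QuotientAddGroup.induction_on with
    | H ξ =>
      rw [hHA, hΓA, ← AddCircle.coe_neg, Function.Periodic.lift_coe, Function.Periodic.lift_coe,
        hH]
      exact Complex.conj_conj _
  -- conjugation relation between coefficients
  have hconj : ∀ n : ℤ, fourierCoeff HA n = conj (fourierCoeff ΓA n) := by
    intro n
    rw [hHA, hΓA, lift_fourierCoeff, lift_fourierCoeff]
    have step1 : (∫ ξ in (-(1:ℝ)/2)..(1/2),
        H ξ * Complex.exp (2 * (π : ℂ) * Complex.I * ((-n : ℤ) : ℂ) * (ξ : ℂ))) =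
        ∫ ξ in (-(1:ℝ)/2)..(1/2),
          (fun u : ℝ => conj (Γ u * Complex.exp (2 * (π : ℂ) * Complex.I * ((-n : ℤ) : ℂ) * (u : ℂ)))) (-ξ) := by
      apply intervalIntegral.integral_congr
      intro ξ _
      simp only [hH, map_mul]
      congr 1
      rw [← Complex.exp_conj]
      congr 1
      push_cast
      simp only [map_mul, map_neg, map_ofNat, Complex.conj_I, Complex.conj_ofReal, map_intCast]
      ring
    rw [step1, intervalIntegral.integral_comp_neg
      (fun u : ℝ => conj (Γ u * Complex.exp (2 * (π : ℂ) * Complex.I * ((-n : ℤ) : ℂ) * (u : ℂ))))]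
    rw [show -(1/2 : ℝ) = -(1:ℝ)/2 by norm_num, show -(-(1:ℝ)/2) = (1:ℝ)/2 by norm_num]
    rw [intervalIntegral.integral_of_le (by norm_num : (-(1:ℝ)/2) ≤ 1/2),
      intervalIntegral.integral_of_le (by norm_num : (-(1:ℝ)/2) ≤ 1/2),
      integral_conj]
  -- identify `poisson`-type integrals with Fourier coefficients
  have hcoeffΦ : ∀ x : ℤ, (∫ ξ in (-(1:ℝ)/2)..(1/2),
      Φ ξ * Complex.exp (2 * (π : ℂ) * Complex.I * (x : ℂ) * (ξ : ℂ))) =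
      fourierCoeff ΦA (-x) := by
    intro x
    rw [hΦA, lift_fourierCoeff Φ hΦp (-x)]
    apply intervalIntegral.integral_congr
    intro ξ _
    rw [neg_neg]
  have hcoeffΓ : ∀ x : ℤ, (∫ ξ in (-(1:ℝ)/2)..(1/2),
      Γ ξ * Complex.exp (2 * (π : ℂ) * Complex.I * (x : ℂ) * (ξ : ℂ))) =
      fourierCoeff ΓA (-x) := by
    intro x
    rw [hΓA, lift_fourierCoeff Γ hΓp (-x)]
    apply intervalIntegral.integral_congr
    intro ξ _
    rw [neg_neg]
  -- Parseval via the Fourier Hilbert basis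
  set ΦL := ContinuousMap.toLp (E := ℂ) 2 haarAddCircle ℂ ⟨ΦA, hΦAc⟩ with hΦL
  set HL := ContinuousMap.toLp (E := ℂ) 2 haarAddCircle ℂ ⟨HA, hHAc⟩ with hHL
  have hreprΦ : ∀ i : ℤ, fourierBasis.repr ΦL i = fourierCoeff ΦA i := by
    intro i
    rw [fourierBasis_repr]
    unfold fourierCoeff
    apply MeasureTheory.integral_congr_ae
    filter_upwards [ContinuousMap.coeFn_toLp (E := ℂ) (p := 2) (𝕜 := ℂ) haarAddCircle ⟨ΦA, hΦAc⟩] with t ht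
    rw [hΦL, ht]
    rfl
  have hreprH : ∀ i : ℤ, fourierBasis.repr HL i = fourierCoeff HA i := by
    intro i
    rw [fourierBasis_repr]
    unfold fourierCoeff
    apply MeasureTheory.integral_congr_ae
    filter_upwards [ContinuousMap.coeFn_toLp (E := ℂ) (p := 2) (𝕜 := ℂ) haarAddCircle ⟨HA, hHAc⟩] with t ht
    rw [hHL, ht]
    rfl
  have key : ∀ i : ℤ, (inner ℂ HL (fourierBasis i) : ℂ) * inner ℂ (fourierBasis i) ΦL =
      fourierCoeff ΓA i * fourierCoeff ΦA i := by
    intro i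
    have e1 : (inner ℂ (fourierBasis i) ΦL : ℂ) = fourierCoeff ΦA i := by
      rw [← fourierBasis.repr_apply_apply, hreprΦ]
    have e2 : (inner ℂ HL (fourierBasis i) : ℂ) = conj (fourierCoeff HA i) := by
      rw [← inner_conj_symm, ← fourierBasis.repr_apply_apply, hreprH]
    rw [e1, e2, hconj, Complex.conj_conj]
  have hpar : ∑' i : ℤ, fourierCoeff ΓA i * fourierCoeff ΦA i = (inner ℂ HL ΦL : ℂ) := by
    rw [← fourierBasis.tsum_inner_mul_inner HL ΦL]
    exact (tsum_congr key).symm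
  have hsum : ∑' x : ℤ, ((∫ ξ in (-(1:ℝ)/2)..(1/2),
        Φ ξ * Complex.exp (2 * (π : ℂ) * Complex.I * (x : ℂ) * (ξ : ℂ))) *
      (∫ ξ in (-(1:ℝ)/2)..(1/2),
        Γ ξ * Complex.exp (2 * (π : ℂ) * Complex.I * (x : ℂ) * (ξ : ℂ)))) =
      (inner ℂ HL ΦL : ℂ) := by
    rw [← hpar]
    have h2 : ∑' x : ℤ, ((∫ ξ in (-(1:ℝ)/2)..(1/2),
        Φ ξ * Complex.exp (2 * (π : ℂ) * Complex.I * (x : ℂ) * (ξ : ℂ))) *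
      (∫ ξ in (-(1:ℝ)/2)..(1/2),
        Γ ξ * Complex.exp (2 * (π : ℂ) * Complex.I * (x : ℂ) * (ξ : ℂ)))) =
        ∑' x : ℤ, (fun i : ℤ => fourierCoeff ΓA i * fourierCoeff ΦA i) ((Equiv.neg ℤ) x) := by
      apply tsum_congr
      intro x
      simp only [Equiv.neg_apply]
      rw [hcoeffΦ, hcoeffΓ]
      ring
    rw [h2, (Equiv.neg ℤ).tsum_eq (fun i : ℤ => fourierCoeff ΓA i * fourierCoeff ΦA i)]
  rw [hsum]
  -- compute the inner product as an integral
  have hvol : (volume : Measure (AddCircle (1:ℝ))) = haarAddCircle := by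
    rw [AddCircle.volume_eq_smul_haarAddCircle]
    simp
  have hinner : (inner ℂ HL ΦL : ℂ) = ∫ t : AddCircle (1:ℝ), ΓA (-t) * ΦA t ∂haarAddCircle := by
    rw [MeasureTheory.L2.inner_def]
    apply MeasureTheory.integral_congr_ae
    filter_upwards [ContinuousMap.coeFn_toLp (E := ℂ) (p := 2) (𝕜 := ℂ) haarAddCircle ⟨HA, hHAc⟩,
      ContinuousMap.coeFn_toLp (E := ℂ) (p := 2) (𝕜 := ℂ) haarAddCircle ⟨ΦA, hΦAc⟩] with t h1 h2
    rw [hHL, hΦL] at *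
    rw [RCLike.inner_apply', h1, h2]
    show conj (HA t) * ΦA t = ΓA (-t) * ΦA t
    congr 1
    exact hHAconj t
  rw [hinner]
  -- back to an interval integral
  have hpre := AddCircle.intervalIntegral_preimage (T := 1) (-(1:ℝ)/2)
    (fun t : AddCircle (1:ℝ) => ΓA (-t) * ΦA t)
  rw [show (-(1:ℝ)/2 + 1) = 1/2 by norm_num] at hpre
  rw [hvol] at hpre
  rw [← hpre]
  apply intervalIntegral.integral_congr
  intro ξ _
  show ΓA (-(ξ : AddCircle (1:ℝ))) * ΦA (ξ : AddCircle (1:ℝ)) = Φ ξ * Γ (-ξ)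
  rw [← AddCircle.coe_neg, hΓA, hΦA, Function.Periodic.lift_coe, Function.Periodic.lift_coe]
  ring

def qfun (f g : ℤ → ℂ) (ξ : ℝ) : ℂ := dft f ξ * dft g (-ξ)

def dfun (y ξ : ℝ) : ℝ :=
  4 * (Real.sin (π * ξ))^2 * Real.exp (-(4 * |Real.sin (π * ξ)| * y))

lemma phi_mul (f g : ℤ → ℂ) (y ξ : ℝ) :
    phifun f y ξ * phifun g y (-ξ) = qfun f g ξ * ((dfun y ξ : ℝ) : ℂ) := by
  unfold phifun qfun dfun
  have hsin : |Real.sin (π * -ξ)| = |Real.sin (π * ξ)| := by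
    rw [mul_neg, Real.sin_neg, abs_neg]
  rw [hsin]
  have hexp2 : Complex.exp (((-(2 * |Real.sin (π * ξ)| * y)) : ℝ) : ℂ) *
      Complex.exp (((-(2 * |Real.sin (π * ξ)| * y)) : ℝ) : ℂ) =
      ((Real.exp (-(4 * |Real.sin (π * ξ)| * y)) : ℝ) : ℂ) := by
    rw [← Complex.ofReal_exp, ← Complex.ofReal_mul, ← Real.exp_add]
    norm_cast
    congr 1
    ring
  have hEE : (Complex.exp (2 * (π : ℂ) * Complex.I * (ξ : ℂ)) - 1) *
      (Complex.exp (2 * (π : ℂ) * Complex.I * ((-ξ : ℝ) : ℂ)) - 1) =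
      ((4 * (Real.sin (π * ξ))^2 : ℝ) : ℂ) := by
    have h2 : 2 * (π : ℂ) * Complex.I * (ξ : ℂ) = ((2 * π * ξ : ℝ) : ℂ) * Complex.I := by
      push_cast; ring
    have h3 : 2 * (π : ℂ) * Complex.I * ((-ξ : ℝ) : ℂ) =
        (-((2 * π * ξ : ℝ) : ℂ)) * Complex.I := by
      push_cast; ring
    rw [h2, h3, Complex.exp_mul_I, Complex.exp_mul_I, Complex.cos_neg, Complex.sin_neg]
    have hpyth := Complex.sin_sq_add_cos_sq ((2 * π * ξ : ℝ) : ℂ)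
    have hstep : (Complex.cos ((2 * π * ξ : ℝ) : ℂ) + Complex.sin ((2 * π * ξ : ℝ) : ℂ)
          * Complex.I - 1) *
        (Complex.cos ((2 * π * ξ : ℝ) : ℂ) + -Complex.sin ((2 * π * ξ : ℝ) : ℂ)
          * Complex.I - 1) = 2 - 2 * Complex.cos ((2 * π * ξ : ℝ) : ℂ) := by
      have hI := Complex.I_sq
      linear_combination hpyth - Complex.sin ((2 * π * ξ : ℝ) : ℂ)^2 * hI
    rw [hstep, ← Complex.ofReal_cos]
    have hreal : 2 - 2 * Real.cos (2 * π * ξ) = 4 * (Real.sin (π * ξ))^2 := by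
      have h4 : Real.cos (2 * (π * ξ)) = 2 * Real.cos (π * ξ)^2 - 1 := Real.cos_two_mul _
      have h5 := Real.sin_sq_add_cos_sq (π * ξ)
      rw [show 2 * π * ξ = 2 * (π * ξ) by ring, h4]
      nlinarith
    push_cast [← hreal]
    ring
  calc dft f ξ * Complex.exp (((-(2 * |Real.sin (π * ξ)| * y)) : ℝ) : ℂ) *
        (Complex.exp (2 * (π : ℂ) * Complex.I * (ξ : ℂ)) - 1) *
      (dft g (-ξ) * Complex.exp (((-(2 * |Real.sin (π * ξ)| * y)) : ℝ) : ℂ) *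
        (Complex.exp (2 * (π : ℂ) * Complex.I * ((-ξ : ℝ) : ℂ)) - 1)) =
      dft f ξ * dft g (-ξ) *
        ((Complex.exp (2 * (π : ℂ) * Complex.I * (ξ : ℂ)) - 1) *
          (Complex.exp (2 * (π : ℂ) * Complex.I * ((-ξ : ℝ) : ℂ)) - 1)) *
        (Complex.exp (((-(2 * |Real.sin (π * ξ)| * y)) : ℝ) : ℂ) *
          Complex.exp (((-(2 * |Real.sin (π * ξ)| * y)) : ℝ) : ℂ)) := by ring
    _ = _ := by
      rw [hEE, hexp2]
      push_cast
      ring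

lemma sum_prod_eq (f g : ℤ → ℂ) (hf : Summable fun x => ‖f x‖) (hg : Summable fun x => ‖g x‖)
    (y : ℝ) :
    (∑' x : ℤ, (poisson f y (x + 1) - poisson f y x) *
        (poisson g y (x + 1) - poisson g y x)) =
      ∫ ξ in (-(1:ℝ)/2)..(1/2), qfun f g ξ * ((dfun y ξ : ℝ) : ℂ) := by
  have h1 : (∑' x : ℤ, (poisson f y (x + 1) - poisson f y x) *
      (poisson g y (x + 1) - poisson g y x)) =
      ∑' x : ℤ, ((∫ ξ in (-(1:ℝ)/2)..(1/2),
        phifun f y ξ * Complex.exp (2 * (π : ℂ) * Complex.I * (x : ℂ) * (ξ : ℂ))) *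
      (∫ ξ in (-(1:ℝ)/2)..(1/2),
        phifun g y ξ * Complex.exp (2 * (π : ℂ) * Complex.I * (x : ℂ) * (ξ : ℂ)))) := by
    apply tsum_congr
    intro x
    rw [poisson_sub f hf y x, poisson_sub g hg y x]
  rw [h1, parseval_core (phifun f y) (phifun g y) (phifun_continuous f hf y)
    (phifun_continuous g hg y) (phifun_periodic f y) (phifun_periodic g y)]
  apply intervalIntegral.integral_congr
  intro ξ _
  exact phi_mul f g y ξ

lemma int_y_exp_integrable {b : ℝ} (hb : 0 < b) :
    MeasureTheory.IntegrableOn (fun y => y * Real.exp (-(b * y))) (Set.Ioi (0:ℝ)) := by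
  have h := integrableOn_rpow_mul_exp_neg_mul_rpow (s := 1) (p := 1) (b := b)
    (by norm_num) one_pos hb
  apply h.congr_fun ?_ measurableSet_Ioi
  intro x _
  simp only [Real.rpow_one, neg_mul]

lemma int_y_exp {b : ℝ} (hb : 0 < b) :
    (∫ y in Set.Ioi (0:ℝ), y * Real.exp (-(b * y))) = 1 / b ^ 2 := by
  have h := Real.integral_rpow_mul_exp_neg_mul_Ioi (a := 2) (r := b) two_pos hb
  rw [show (2 - 1 : ℝ) = 1 by norm_num] at h
  simp_rw [Real.rpow_one] at h
  rw [h, Real.Gamma_two]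
  rw [show ((2:ℝ)) = ((2:ℕ):ℝ) by norm_num, Real.rpow_natCast]
  ring

lemma dfun_nonneg (y ξ : ℝ) : 0 ≤ dfun y ξ := by
  unfold dfun
  positivity

lemma dfun_integrable (ξ : ℝ) :
    MeasureTheory.IntegrableOn (fun y => dfun y ξ * y) (Set.Ioi (0:ℝ)) := by
  unfold dfun
  rcases eq_or_ne (Real.sin (π * ξ)) 0 with h | h
  · simp [h]
  · have hb : 0 < 4 * |Real.sin (π * ξ)| := by positivity
    have h3 : MeasureTheory.IntegrableOn
        (fun y => 4 * (Real.sin (π * ξ))^2 * (y * Real.exp (-(4 * |Real.sin (π * ξ)| * y))))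
        (Set.Ioi (0:ℝ)) := (int_y_exp_integrable hb).const_mul _
    apply h3.congr_fun ?_ measurableSet_Ioi
    intro x _
    simp only []
    ring

lemma dfun_integral (ξ : ℝ) (h : Real.sin (π * ξ) ≠ 0) :
    (∫ y in Set.Ioi (0:ℝ), dfun y ξ * y) = 1 / 4 := by
  unfold dfun
  have hb : 0 < 4 * |Real.sin (π * ξ)| := by positivity
  have h2 : ∀ y : ℝ, 4 * (Real.sin (π * ξ))^2 * Real.exp (-(4 * |Real.sin (π * ξ)| * y)) * y =
      4 * (Real.sin (π * ξ))^2 * (y * Real.exp (-(4 * |Real.sin (π * ξ)| * y))) := by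
    intro y; ring
  simp_rw [h2]
  rw [MeasureTheory.integral_const_mul, int_y_exp hb]
  have habs : |Real.sin (π * ξ)| ^ 2 = (Real.sin (π * ξ))^2 := sq_abs _
  field_simp
  nlinarith [sq_abs (Real.sin (π * ξ)), sq_nonneg (Real.sin (π * ξ))]

lemma ortho (k : ℤ) :
    (∫ ξ in (-(1:ℝ)/2)..(1/2), Complex.exp (2 * (π:ℂ) * Complex.I * (k:ℂ) * (ξ:ℂ))) =
      if k = 0 then 1 else 0 := by
  rcases eq_or_ne k 0 with hk | hk
  · subst hk
    simp only [Int.cast_zero, mul_zero, zero_mul, Complex.exp_zero, if_pos rfl]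
    rw [intervalIntegral.integral_const]
    norm_num
  · rw [if_neg hk]
    have hc : (2 * (π:ℂ) * Complex.I * (k:ℂ)) ≠ 0 :=
      mul_ne_zero (mul_ne_zero (mul_ne_zero two_ne_zero
        (Complex.ofReal_ne_zero.2 Real.pi_ne_zero)) Complex.I_ne_zero)
        (Int.cast_ne_zero.2 hk)
    rw [integral_exp_mul_complex hc]
    have harg : (2 * (π:ℂ) * Complex.I * (k:ℂ)) * (((1:ℝ)/2 : ℝ) : ℂ) =
        (2 * (π:ℂ) * Complex.I * (k:ℂ)) * ((-(1:ℝ)/2 : ℝ) : ℂ) + (k:ℂ) * (2 * π * Complex.I) := by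
      push_cast; ring
    rw [harg, Complex.exp_add, Complex.exp_int_mul_two_pi_mul_I, mul_one, sub_self, zero_div]

lemma norm_exp_eq_one {z : ℂ} (hz : z.re = 0) : ‖Complex.exp z‖ = 1 := by
  rw [Complex.norm_exp, hz, Real.exp_zero]

lemma inversion (f g : ℤ → ℂ) (hf : Summable fun x => ‖f x‖) (hg : Summable fun x => ‖g x‖) :
    (∫ ξ in Set.Ioc (-(1:ℝ)/2) (1/2), qfun f g ξ) = ∑' x : ℤ, f x * g x := by
  have hIoc : (volume (Set.Ioc (-(1:ℝ)/2) (1/2))) = 1 := by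
    rw [Real.volume_Ioc]
    norm_num
  -- inner evaluation
  have inner_eval : ∀ a : ℤ,
      (∫ ξ in Set.Ioc (-(1:ℝ)/2) (1/2),
        Complex.exp (-(2 * (π:ℂ) * Complex.I * (a:ℂ) * (ξ:ℂ))) * dft g (-ξ)) = g a := by
    intro a
    have hterm : ∀ ξ : ℝ, Complex.exp (-(2 * (π:ℂ) * Complex.I * (a:ℂ) * (ξ:ℂ))) * dft g (-ξ)
        = ∑' b : ℤ, g b * Complex.exp (2 * (π:ℂ) * Complex.I * (((b - a : ℤ)):ℂ) * (ξ:ℂ)) := by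
      intro ξ
      rw [dft, ← tsum_mul_left]
      apply tsum_congr
      intro b
      have harg : -(2 * (π:ℂ) * Complex.I * (a:ℂ) * (ξ:ℂ)) +
          -(2 * (π:ℂ) * Complex.I * (b:ℂ) * (((-ξ : ℝ)):ℂ)) =
          2 * (π:ℂ) * Complex.I * (((b - a : ℤ)):ℂ) * (ξ:ℂ) := by
        push_cast; ring
      calc Complex.exp (-(2 * (π:ℂ) * Complex.I * (a:ℂ) * (ξ:ℂ))) *
            (g b * Complex.exp (-(2 * (π:ℂ) * Complex.I * (b:ℂ) * (((-ξ : ℝ)):ℂ)))) =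
          g b * (Complex.exp (-(2 * (π:ℂ) * Complex.I * (a:ℂ) * (ξ:ℂ))) *
            Complex.exp (-(2 * (π:ℂ) * Complex.I * (b:ℂ) * (((-ξ : ℝ)):ℂ)))) := by ring
        _ = g b * Complex.exp (2 * (π:ℂ) * Complex.I * (((b - a : ℤ)):ℂ) * (ξ:ℂ)) := by
            rw [← Complex.exp_add, harg]
    simp_rw [hterm]
    rw [MeasureTheory.integral_tsum]
    · have hval : ∀ b : ℤ,
          (∫ ξ in Set.Ioc (-(1:ℝ)/2) (1/2),
            g b * Complex.exp (2 * (π:ℂ) * Complex.I * (((b - a : ℤ)):ℂ) * (ξ:ℂ))) =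
          g b * (if (b - a : ℤ) = 0 then 1 else 0) := by
        intro b
        rw [MeasureTheory.integral_const_mul]
        congr 1
        rw [← intervalIntegral.integral_of_le (by norm_num : (-(1:ℝ)/2) ≤ 1/2)]
        exact ortho (b - a)
      simp_rw [hval]
      rw [tsum_eq_single a]
      · simp
      · intro b hb
        rw [if_neg (sub_ne_zero.2 hb), mul_zero]
    · intro b
      apply Continuous.aestronglyMeasurable
      exact continuous_const.mul (Complex.continuous_exp.comp (by continuity))
    · apply ne_top_of_le_ne_top (b := ∑' b : ℤ, ENNReal.ofReal ‖g b‖)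
      · rw [← ENNReal.ofReal_tsum_of_nonneg (fun b => norm_nonneg _) hg]
        exact ENNReal.ofReal_ne_top
      · apply ENNReal.tsum_le_tsum
        intro b
        have hle : ∀ ξ : ℝ, (‖g b * Complex.exp (2 * (π:ℂ) * Complex.I
            * (((b - a : ℤ)):ℂ) * (ξ:ℂ))‖₊ : ℝ≥0∞) ≤ ENNReal.ofReal ‖g b‖ := by
          intro ξ
          rw [← enorm_eq_nnnorm, ← ofReal_norm]
          apply ENNReal.ofReal_le_ofReal
          rw [norm_mul, norm_exp_eq_one (by simp [Complex.mul_re, Complex.mul_im]), mul_one]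
        calc (∫⁻ ξ in Set.Ioc (-(1:ℝ)/2) (1/2), ‖g b * Complex.exp (2 * (π:ℂ) * Complex.I
              * (((b - a : ℤ)):ℂ) * (ξ:ℂ))‖₊) ≤
            ∫⁻ (_t : ℝ) in Set.Ioc (-(1:ℝ)/2) (1/2), ENNReal.ofReal ‖g b‖ :=
              MeasureTheory.lintegral_mono fun ξ => hle ξ
          _ = ENNReal.ofReal ‖g b‖ := by
              rw [MeasureTheory.lintegral_const, MeasureTheory.Measure.restrict_apply_univ, hIoc,
                mul_one]
  -- outer expansion
  have houter : ∀ ξ : ℝ, qfun f g ξ =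
      ∑' a : ℤ, f a * Complex.exp (-(2 * (π:ℂ) * Complex.I * (a:ℂ) * (ξ:ℂ))) * dft g (-ξ) := by
    intro ξ
    rw [qfun, dft, ← tsum_mul_right]
  simp_rw [houter]
  rw [MeasureTheory.integral_tsum]
  · apply tsum_congr
    intro a
    have : ∀ ξ : ℝ, f a * Complex.exp (-(2 * (π:ℂ) * Complex.I * (a:ℂ) * (ξ:ℂ))) * dft g (-ξ) =
        f a * (Complex.exp (-(2 * (π:ℂ) * Complex.I * (a:ℂ) * (ξ:ℂ))) * dft g (-ξ)) := by
      intro ξ; ring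
    simp_rw [this]
    rw [MeasureTheory.integral_const_mul, inner_eval a]
  · intro a
    apply Continuous.aestronglyMeasurable
    apply Continuous.mul
    · exact continuous_const.mul (Complex.continuous_exp.comp (by continuity))
    · exact (dft_continuous g hg).comp continuous_neg
  · apply ne_top_of_le_ne_top (b := ∑' a : ℤ, ENNReal.ofReal (‖f a‖ * (∑' x, ‖g x‖)))
    · rw [← ENNReal.ofReal_tsum_of_nonneg (fun a => mul_nonneg (norm_nonneg _) (tsum_nonneg fun _ => norm_nonneg _))
        (hf.mul_right (∑' x, ‖g x‖))]
      exact ENNReal.ofReal_ne_top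
    · apply ENNReal.tsum_le_tsum
      intro a
      have hle : ∀ ξ : ℝ, (‖f a * Complex.exp (-(2 * (π:ℂ) * Complex.I * (a:ℂ) * (ξ:ℂ)))
          * dft g (-ξ)‖₊ : ℝ≥0∞) ≤ ENNReal.ofReal (‖f a‖ * (∑' x, ‖g x‖)) := by
        intro ξ
        rw [← enorm_eq_nnnorm, ← ofReal_norm]
        apply ENNReal.ofReal_le_ofReal
        rw [norm_mul, norm_mul, norm_exp_eq_one (by simp [Complex.mul_re, Complex.mul_im]),
          mul_one]
        exact mul_le_mul_of_nonneg_left (dft_norm_le g hg (-ξ)) (norm_nonneg _)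
      calc (∫⁻ ξ in Set.Ioc (-(1:ℝ)/2) (1/2), ‖f a * Complex.exp (-(2 * (π:ℂ) * Complex.I
            * (a:ℂ) * (ξ:ℂ))) * dft g (-ξ)‖₊) ≤
          ∫⁻ (_t : ℝ) in Set.Ioc (-(1:ℝ)/2) (1/2), ENNReal.ofReal (‖f a‖ * (∑' x, ‖g x‖)) :=
            MeasureTheory.lintegral_mono fun ξ => hle ξ
        _ = ENNReal.ofReal (‖f a‖ * (∑' x, ‖g x‖)) := by
            rw [MeasureTheory.lintegral_const, MeasureTheory.Measure.restrict_apply_univ, hIoc,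
              mul_one]

lemma sin_ne (ξ : ℝ) (h1 : ξ ∈ Set.Ioc (-(1:ℝ)/2) (1/2)) (h2 : ξ ≠ 0) :
    Real.sin (π * ξ) ≠ 0 := by
  obtain ⟨ha, hb⟩ := h1
  rcases lt_or_gt_of_ne h2 with hneg | hpos
  · have h3 : 0 < Real.sin (π * -ξ) := by
      apply Real.sin_pos_of_pos_of_lt_pi
      · exact mul_pos Real.pi_pos (neg_pos.2 hneg)
      · nlinarith [Real.pi_pos]
    rw [mul_neg, Real.sin_neg] at h3
    intro h; rw [h] at h3; simp at h3
  · have h3 : 0 < Real.sin (π * ξ) := by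
      apply Real.sin_pos_of_pos_of_lt_pi
      · exact mul_pos Real.pi_pos hpos
      · nlinarith [Real.pi_pos]
    exact ne_of_gt h3

lemma qfun_continuous (f g : ℤ → ℂ) (hf : Summable fun x => ‖f x‖)
    (hg : Summable fun x => ‖g x‖) : Continuous (qfun f g) :=
  (dft_continuous f hf).mul ((dft_continuous g hg).comp continuous_neg)

lemma qfun_norm_le (f g : ℤ → ℂ) (hf : Summable fun x => ‖f x‖)
    (hg : Summable fun x => ‖g x‖) (ξ : ℝ) :
    ‖qfun f g ξ‖ ≤ (∑' x, ‖f x‖) * (∑' x, ‖g x‖) := by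
  rw [qfun, norm_mul]
  exact mul_le_mul (dft_norm_le f hf ξ) (dft_norm_le g hg (-ξ)) (norm_nonneg _)
    (tsum_nonneg fun _ => norm_nonneg _)

lemma dfun_continuous2 : Continuous (fun p : ℝ × ℝ => dfun p.1 p.2) := by
  unfold dfun
  have hs : Continuous (fun p : ℝ × ℝ => Real.sin (π * p.2)) :=
    Real.continuous_sin.comp (continuous_const.mul continuous_snd)
  exact (continuous_const.mul (hs.pow 2)).mul
    (Real.continuous_exp.comp ((continuous_const.mul hs.abs).mul continuous_fst).neg)

lemma dfun_abs_integral (ξ : ℝ) :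
    (∫ y in Set.Ioi (0:ℝ), |dfun y ξ * y|) = ∫ y in Set.Ioi (0:ℝ), dfun y ξ * y := by
  apply MeasureTheory.setIntegral_congr_fun measurableSet_Ioi
  intro y hy
  exact abs_of_nonneg (mul_nonneg (dfun_nonneg _ _) (le_of_lt hy))

lemma dfun_integral_le (ξ : ℝ) : (∫ y in Set.Ioi (0:ℝ), dfun y ξ * y) ≤ 1/4 := by
  rcases eq_or_ne (Real.sin (π * ξ)) 0 with h | h
  · have : ∀ y : ℝ, dfun y ξ * y = 0 := by
      intro y; unfold dfun; rw [h]; ring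
    simp_rw [this]
    norm_num
  · rw [dfun_integral ξ h]

lemma prod_integrable (f g : ℤ → ℂ) (hf : Summable fun x => ‖f x‖)
    (hg : Summable fun x => ‖g x‖) :
    MeasureTheory.Integrable (fun p : ℝ × ℝ => qfun f g p.2 * ((dfun p.1 p.2 * p.1 : ℝ) : ℂ))
      ((volume.restrict (Set.Ioi (0:ℝ))).prod
        (volume.restrict (Set.Ioc (-(1:ℝ)/2) (1/2)))) := by
  set M := (∑' x, ‖f x‖) * (∑' x, ‖g x‖) with hM
  have hMnn : 0 ≤ M := mul_nonneg (tsum_nonneg fun _ => norm_nonneg _)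
    (tsum_nonneg fun _ => norm_nonneg _)
  have hcont : Continuous (fun p : ℝ × ℝ => qfun f g p.2 * ((dfun p.1 p.2 * p.1 : ℝ) : ℂ)) := by
    apply Continuous.mul
    · exact (qfun_continuous f g hf hg).comp continuous_snd
    · exact Complex.continuous_ofReal.comp (dfun_continuous2.mul continuous_fst)
  rw [MeasureTheory.integrable_prod_iff' hcont.aestronglyMeasurable]
  constructor
  · apply Filter.Eventually.of_forall
    intro ξ
    exact ((dfun_integrable ξ).ofReal (𝕜 := ℂ)).const_mul (qfun f g ξ)
  · have hbound : ∀ ξ : ℝ, (∫ y in Set.Ioi (0:ℝ),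
        ‖qfun f g ξ * ((dfun y ξ * y : ℝ) : ℂ)‖) ≤ M * (1/4) := by
      intro ξ
      have h1 : ∀ y : ℝ, ‖qfun f g ξ * ((dfun y ξ * y : ℝ) : ℂ)‖ =
          ‖qfun f g ξ‖ * |dfun y ξ * y| := by
        intro y
        rw [norm_mul, Complex.norm_real, Real.norm_eq_abs]
      simp_rw [h1]
      rw [MeasureTheory.integral_const_mul, dfun_abs_integral]
      exact mul_le_mul (qfun_norm_le f g hf hg ξ) (dfun_integral_le ξ)
        (by rw [← dfun_abs_integral]; exact MeasureTheory.integral_nonneg fun y => abs_nonneg _)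
        hMnn
    have hmeas : MeasureTheory.StronglyMeasurable (fun ξ : ℝ => ∫ y in Set.Ioi (0:ℝ),
        ‖qfun f g ξ * ((dfun y ξ * y : ℝ) : ℂ)‖) := by
      apply MeasureTheory.StronglyMeasurable.integral_prod_left
        (f := fun y ξ => ‖qfun f g ξ * ((dfun y ξ * y : ℝ) : ℂ)‖)
      exact hcont.norm.stronglyMeasurable
    apply MeasureTheory.Integrable.mono'
      (g := fun _ : ℝ => M * (1/4))
      (MeasureTheory.integrableOn_const measure_Ioc_lt_top.ne)
      hmeas.aestronglyMeasurable
    apply Filter.Eventually.of_forall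
    intro ξ
    rw [Real.norm_eq_abs, abs_of_nonneg (MeasureTheory.integral_nonneg fun y => norm_nonneg _)]
    exact hbound ξ

/-- Littlewood–Paley identity with discrete derivatives:
`(f,g)_{ℓ²(ℤ)} = 4 ∫₀^∞ (∂⁺_x P_y f, ∂⁺_x P_y g)_{ℓ²(ℤ)} y dy`. -/
theorem littlewood_paley_discrete (f g : ℤ → ℂ)
    (hf : Summable fun x => ‖f x‖) (hg : Summable fun x => ‖g x‖) :
    ∑' x : ℤ, f x * g x =
      4 * ∫ y in Set.Ioi (0 : ℝ),
        (∑' x : ℤ, (poisson f y (x + 1) - poisson f y x) *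
          (poisson g y (x + 1) - poisson g y x)) * (y : ℂ) := by
  symm
  have h1 : ∀ y : ℝ, (∑' x : ℤ, (poisson f y (x + 1) - poisson f y x) *
      (poisson g y (x + 1) - poisson g y x)) * (y : ℂ) =
      ∫ ξ in Set.Ioc (-(1:ℝ)/2) (1/2), qfun f g ξ * ((dfun y ξ * y : ℝ) : ℂ) := by
    intro y
    rw [sum_prod_eq f g hf hg y, intervalIntegral.integral_of_le (by norm_num : (-(1:ℝ)/2) ≤ 1/2),
      ← MeasureTheory.integral_mul_const]
    apply MeasureTheory.setIntegral_congr_fun measurableSet_Ioc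
    intro ξ _
    push_cast
    ring
  have hne0 : ∀ᵐ ξ ∂(volume.restrict (Set.Ioc (-(1:ℝ)/2) (1/2))), ξ ≠ (0:ℝ) := by
    apply MeasureTheory.ae_restrict_of_ae
    rw [MeasureTheory.ae_iff]
    have : {a : ℝ | ¬ a ≠ 0} = {(0:ℝ)} := by
      ext a; simp
    rw [this]
    exact Real.volume_singleton
  have hae : ∀ᵐ ξ ∂(volume.restrict (Set.Ioc (-(1:ℝ)/2) (1/2))),
      (∫ y in Set.Ioi (0:ℝ), qfun f g ξ * ((dfun y ξ * y : ℝ) : ℂ)) =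
        qfun f g ξ * (((1:ℝ)/4 : ℝ) : ℂ) := by
    filter_upwards [MeasureTheory.ae_restrict_mem measurableSet_Ioc, hne0] with ξ hmem hne
    rw [MeasureTheory.integral_const_mul]
    congr 1
    rw [← dfun_integral ξ (sin_ne ξ hmem hne)]
    exact integral_ofReal
  calc 4 * ∫ y in Set.Ioi (0:ℝ), (∑' x : ℤ, (poisson f y (x + 1) - poisson f y x) *
        (poisson g y (x + 1) - poisson g y x)) * (y : ℂ)
      = 4 * ∫ y in Set.Ioi (0:ℝ), ∫ ξ in Set.Ioc (-(1:ℝ)/2) (1/2),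
          qfun f g ξ * ((dfun y ξ * y : ℝ) : ℂ) := by
        congr 1
        exact MeasureTheory.integral_congr_ae (Filter.Eventually.of_forall h1)
    _ = 4 * ∫ ξ in Set.Ioc (-(1:ℝ)/2) (1/2), ∫ y in Set.Ioi (0:ℝ),
          qfun f g ξ * ((dfun y ξ * y : ℝ) : ℂ) := by
        rw [MeasureTheory.integral_integral_swap (prod_integrable f g hf hg)]
    _ = 4 * ∫ ξ in Set.Ioc (-(1:ℝ)/2) (1/2), qfun f g ξ * (((1:ℝ)/4 : ℝ) : ℂ) := by
        rw [MeasureTheory.integral_congr_ae hae]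
    _ = ∑' x : ℤ, f x * g x := by
        rw [MeasureTheory.integral_mul_const, inversion f g hf hg]
        push_cast
        ring
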